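/- A probabilistic Moore machine $Q$ has probabilistic interference (there exist input sequences $\vec{\imath}_1, \vec{\imath}_2$ with equal low projections but unequal induced distributions on low-output sequences) if and only if in the associated SEM $M_Q$ there exists a fixed low-input sequence $\ell$ of some length $t$ and two high-input sequences $h_1, h_2$ of length $t$ such that the interventional distributions of the low-output vector $\vec{LO}^{1:t}$ under $\mathrm{do}(\vec{HI}^{1:t} := h_1, \vec{LI}^{1:t} := \ell)$ and under $\mathrm{do}(\vec{HI}^{1:t} := h_2, \vec{LI}^{1:t} := \ell)$ differ. -/

import Mathlib

/-- Trace probability of a probabilistic Moore machine. -/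
noncomputable def ptrace {S I O : Type*} [Fintype S] [DecidableEq S] [DecidableEq O]
    (τ : S → I → S → ℝ) (σ : S → O) : S → List I → List O → List S → ℝ
  | s, [], os, ss => if os = [σ s] ∧ ss = [s] then 1 else 0
  | s, i :: is, o :: os, s1 :: ss =>
      if o = σ s ∧ s1 = s then ∑ s' : S, τ s i s' * ptrace τ σ s' is os ss else 0
  | _, _ :: _, _, _ => 0

/-- The machine's marginal probability of a low-output sequence `lo` on the input
sequence `i` (given as a function), from initial state `s0`. -/
noncomputable def machLow {S IH IL OH OL : Type*} [Fintype S] [Fintype OH]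
    [DecidableEq S] [DecidableEq OH] [DecidableEq OL]
    (τ : S → (IH × IL) → S → ℝ) (σ : S → OH × OL) (s0 : S) (k : ℕ)
    (i : Fin k → IH × IL) (lo : Fin (k + 1) → OL) : ℝ :=
  ∑ ho : Fin (k + 1) → OH, ∑ ssf : Fin (k + 1) → S,
    ptrace τ σ s0 (List.ofFn i) (List.ofFn fun j => (ho j, lo j)) (List.ofFn ssf)

/-- Interventional probability in the SEM `M_Q`, by truncated factorization. -/
noncomputable def intervProb {S I O : Type*} [Fintype S] [DecidableEq S] [DecidableEq O]
    (τ : S → I → S → ℝ) (σ : S → O) (s : S) (k : ℕ)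
    (isf : Fin k → I) (osf : Fin (k + 1) → O) (ssf : Fin (k + 1) → S) : ℝ :=
  (if ssf 0 = s then (1 : ℝ) else 0) *
  (if osf 0 = σ (ssf 0) then 1 else 0) *
  ∏ κ : Fin k,
    τ (ssf κ.castSucc) (isf κ) (ssf κ.succ) *
      (if osf κ.succ = σ (ssf κ.succ) then 1 else 0)

/-- Interventional distribution of the low outputs in `M_Q` under
`do(HI⃗ := h, LI⃗ := ℓ)` (the state starts at `s0` by the model's structural
equation). -/
noncomputable def intervLow {S IH IL OH OL : Type*} [Fintype S] [Fintype OH]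
    [DecidableEq S] [DecidableEq OH] [DecidableEq OL]
    (τ : S → (IH × IL) → S → ℝ) (σ : S → OH × OL) (s0 : S) (k : ℕ)
    (h : Fin k → IH) (ℓ : Fin k → IL) (lo : Fin (k + 1) → OL) : ℝ :=
  ∑ ho : Fin (k + 1) → OH, ∑ ssf : Fin (k + 1) → S,
    intervProb τ σ s0 k (fun j => (h j, ℓ j)) (fun j => (ho j, lo j)) ssf

/-
Unfolding the truncated factorization one step at a time is exactly the recursion
defining the trace probability: the product over the first transition peels off,
and the sum over the next state in `ptrace` collapses because the interventional
probability vanishes unless its state sequence starts at that state. So intervening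
with `do(HI⃗ := h, LI⃗ := ℓ)` yields the machine's low-output distribution on the
input `(h, ℓ)`.
-/

section TraceEquality

variable {S I O : Type*} [Fintype S] [DecidableEq S] [DecidableEq O]
  (τ : S → I → S → ℝ) (σ : S → O)

theorem intervProb_eq_zero_of_ne {s : S} {k : ℕ} (isf : Fin k → I)
    (osf : Fin (k + 1) → O) {ssf : Fin (k + 1) → S} (hs : ssf 0 ≠ s) :
    intervProb τ σ s k isf osf ssf = 0 := by
  simp [intervProb, hs]

theorem intervProb_succ (s : S) (k : ℕ) (isf : Fin (k + 1) → I)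
    (osf : Fin (k + 2) → O) (ssf : Fin (k + 2) → S) :
    intervProb τ σ s (k + 1) isf osf ssf =
      (if ssf 0 = s then 1 else 0) * (if osf 0 = σ (ssf 0) then 1 else 0) *
        (τ (ssf 0) (isf 0) (ssf 1) *
          intervProb τ σ (ssf 1) k (fun j => isf j.succ) (fun j => osf j.succ)
            (fun j => ssf j.succ)) := by
  simp only [intervProb, Fin.prod_univ_succ, Fin.castSucc_zero, Fin.succ_zero_eq_one,
    Fin.succ_castSucc, if_true, one_mul]
  ring

theorem sum_mul_intervProb (f : S → ℝ) (k : ℕ) (isf : Fin k → I)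
    (osf : Fin (k + 1) → O) (ssf : Fin (k + 1) → S) :
    ∑ s', f s' * intervProb τ σ s' k isf osf ssf =
      f (ssf 0) * intervProb τ σ (ssf 0) k isf osf ssf :=
  Finset.sum_eq_single (ssf 0)
    (fun _ _ hs => by rw [intervProb_eq_zero_of_ne τ σ isf osf (Ne.symm hs), mul_zero])
    (fun h => absurd (Finset.mem_univ _) h)

theorem ptrace_ofFn_eq_intervProb (k : ℕ) (s : S) (isf : Fin k → I)
    (osf : Fin (k + 1) → O) (ssf : Fin (k + 1) → S) :
    ptrace τ σ s (List.ofFn isf) (List.ofFn osf) (List.ofFn ssf) =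
      intervProb τ σ s k isf osf ssf := by
  induction k generalizing s with
  | zero =>
    by_cases hs : ssf 0 = s <;> simp [ptrace, intervProb, hs]
  | succ k ih =>
    rw [List.ofFn_succ, List.ofFn_succ (f := osf), List.ofFn_succ (f := ssf), ptrace]
    simp only [ih, sum_mul_intervProb, intervProb_succ]
    by_cases hs : ssf 0 = s
    · subst hs
      by_cases ho : osf 0 = σ (ssf 0) <;> simp [ho]
    · simp [hs]

end TraceEquality

theorem machLow_eq_intervLow {S IH IL OH OL : Type*} [Fintype S] [Fintype OH]
    [DecidableEq S] [DecidableEq OH] [DecidableEq OL]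
    (τ : S → (IH × IL) → S → ℝ) (σ : S → OH × OL) (s0 : S) (k : ℕ)
    (i : Fin k → IH × IL) (lo : Fin (k + 1) → OL) :
    machLow τ σ s0 k i lo = intervLow τ σ s0 k (fun j => (i j).1) (fun j => (i j).2) lo := by
  simp only [machLow, intervLow, ptrace_ofFn_eq_intervProb]

theorem interference_iff_effect_general
    {S IH IL OH OL : Type*} [Fintype S] [Fintype OH]
    [DecidableEq S] [DecidableEq OH] [DecidableEq OL]
    (τ : S → (IH × IL) → S → ℝ) (σ : S → OH × OL) (s0 : S) :
    (∃ (k : ℕ) (i1 i2 : Fin k → IH × IL),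
        (∀ j, (i1 j).2 = (i2 j).2) ∧
        ∃ lo : Fin (k + 1) → OL,
          machLow τ σ s0 k i1 lo ≠ machLow τ σ s0 k i2 lo) ↔
    (∃ (k : ℕ) (ℓ : Fin k → IL) (h1 h2 : Fin k → IH),
        ∃ lo : Fin (k + 1) → OL,
          intervLow τ σ s0 k h1 ℓ lo ≠ intervLow τ σ s0 k h2 ℓ lo) := by
  constructor
  · rintro ⟨k, i1, i2, hlow, lo, hne⟩
    refine ⟨k, fun j => (i1 j).2, fun j => (i1 j).1, fun j => (i2 j).1, lo, ?_⟩
    rwa [machLow_eq_intervLow, machLow_eq_intervLow, ← funext hlow] at hne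
  · rintro ⟨k, ℓ, h1, h2, lo, hne⟩
    refine ⟨k, fun j => (h1 j, ℓ j), fun j => (h2 j, ℓ j), fun _ => rfl, lo, ?_⟩
    rwa [machLow_eq_intervLow, machLow_eq_intervLow]

/-- a probabilistic Moore machine `Q` has probabilistic interference
(two input sequences with equal low projections inducing different low-output
distributions) iff in the SEM `M_Q` there are a fixed low-input sequence `ℓ` and
two high-input sequences `h1, h2` whose interventional low-output distributions
differ. -/
theorem interference_iff_effect
    {S IH IL OH OL : Type*} [Fintype S] [Fintype OH]
    [DecidableEq S] [DecidableEq OH] [DecidableEq OL]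
    (τ : S → (IH × IL) → S → ℝ) (σ : S → OH × OL) (s0 : S)
    (hτ0 : ∀ s i s', 0 ≤ τ s i s') (hτ1 : ∀ s i, ∑ s', τ s i s' = 1) :
    (∃ (k : ℕ) (i1 i2 : Fin k → IH × IL),
        (∀ j, (i1 j).2 = (i2 j).2) ∧
        ∃ lo : Fin (k + 1) → OL,
          machLow τ σ s0 k i1 lo ≠ machLow τ σ s0 k i2 lo) ↔
    (∃ (k : ℕ) (ℓ : Fin k → IL) (h1 h2 : Fin k → IH),
        ∃ lo : Fin (k + 1) → OL,
          intervLow τ σ s0 k h1 ℓ lo ≠ intervLow τ σ s0 k h2 ℓ lo) :=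
  interference_iff_effect_general τ σ s0
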